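/- Let g ≥ 0, Δt > 0 and |T| > 0 be real numbers. Let I be a finite index set and for each i ∈ I let ℓᵢ > 0, let nᵢ ∈ ℝ² with ‖nᵢ‖ = 1, and assume Σ_{i∈I} ℓᵢ nᵢ = 0. Let (η, q, b) ∈ ℝ × ℝ² × ℝ be interior data with h = η − b ≥ 0 and q = 0 whenever h = 0, and for each i let (ηᵢ, qᵢ, bᵢ) be exterior data with hᵢ = ηᵢ − bᵢ ≥ 0 and qᵢ = 0 whenever hᵢ = 0. For each i apply the hydrostatic reconstruction with interior data (η, q, b) and exterior data (ηᵢ, qᵢ, bᵢ), giving ȟᵢ⁻, ȟᵢ⁺, η̌ᵢ⁻, η̌ᵢ⁺, q̌ᵢ⁻, q̌ᵢ⁺. Let a ≥ 0 be such that for every i ∈ I: if h > 0 then a ≥ |q·nᵢ|/h + √(g h), and if hᵢ > 0 then a ≥ |qᵢ·nᵢ|/hᵢ + √(g hᵢ). If the CFL condition a (Σ_{i∈I} ℓᵢ) Δt / |T| ≤ 1 holds, then the updated cell-averaged water height h' := h − (Δt/|T|) Σ_{i∈I} ℓᵢ · (1/2)( q̌ᵢ⁻·nᵢ + q̌ᵢ⁺·nᵢ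 − a (η̌ᵢ⁺ − η̌ᵢ⁻) ) is nonnegative. -/

import Mathlib

noncomputable section

open scoped RealInnerProductSpace

abbrev E2 := EuclideanSpace ℝ (Fin 2)

/-- `b* = max(b⁻, b⁺)`. -/
def bstar (bm bp : ℝ) : ℝ := max bm bp

/-- `b̌ = b* − max(0, b* − η⁻)`. -/
def bcheck (ηm bm bp : ℝ) : ℝ := bstar bm bp - max 0 (bstar bm bp - ηm)

/-- `ȟ⁻ = max(0, η⁻ − b*)`. -/
def hcheckm (ηm bm bp : ℝ) : ℝ := max 0 (ηm - bstar bm bp)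

/-- `ȟ⁺ = max(0, η⁺ − b*)`. -/
def hcheckp (ηm ηp bm bp : ℝ) : ℝ := max 0 (ηp - bstar bm bp)

/-- `η̌⁻ = ȟ⁻ + b̌`. -/
def etacheckm (ηm bm bp : ℝ) : ℝ := hcheckm ηm bm bp + bcheck ηm bm bp

/-- `η̌⁺ = ȟ⁺ + b̌`. -/
def etacheckp (ηm ηp bm bp : ℝ) : ℝ := hcheckp ηm ηp bm bp + bcheck ηm bm bp

/-- `q̌⁻ = (ȟ⁻/(η⁻ − b⁻)) q⁻`. -/
def qcheckm (ηm bm bp : ℝ) (qm : E2) : E2 := (hcheckm ηm bm bp / (ηm - bm)) • qm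

/-- `q̌⁺ = (ȟ⁺/(η⁺ − b⁺)) q⁺`. -/
def qcheckp (ηm ηp bm bp : ℝ) (qp : E2) : E2 := (hcheckp ηm ηp bm bp / (ηp - bp)) • qp

/-!
The reconstruction only lowers water heights: `0 ≤ ȟ⁻ ≤ h` and `0 ≤ ȟ⁺ ≤ hᵢ`, and `q̌` is `q`
rescaled by `ȟ / h`. So the wave-speed bound `|q·n| ≤ a h` passes to `q̌·n ≤ a ȟ` on both sides,
which makes the mass flux through each face at most `½(a ȟ⁻ + a ȟ⁺ − a (ȟ⁺ − ȟ⁻)) = a ȟ⁻ ≤ a h`.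
The CFL condition then bounds the total outflow `(Δt/|T|) Σ ℓᵢ Fᵢ` by `h`.
-/

open Finset

def lfMassFlux (a ηm ηp bm bp : ℝ) (qm qp n : E2) : ℝ :=
  (1 / 2 : ℝ) * (⟪qcheckm ηm bm bp qm, n⟫ + ⟪qcheckp ηm ηp bm bp qp, n⟫
    - a * (etacheckp ηm ηp bm bp - etacheckm ηm bm bp))

lemma le_mul_of_abs_div_add_le {x h c a : ℝ} (hh : 0 < h) (hc : 0 ≤ c)
    (H : |x| / h + c ≤ a) : x ≤ a * h :=
  calc x ≤ |x| := le_abs_self x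
    _ = |x| / h * h := (div_mul_cancel₀ _ hh.ne').symm
    _ ≤ a * h := mul_le_mul_of_nonneg_right (by linarith) hh.le

lemma inner_div_smul_le {F : Type*} [NormedAddCommGroup F] [InnerProductSpace ℝ F]
    {q n : F} {a c h : ℝ} (hc : 0 ≤ c) (hch : c ≤ h) (hq : 0 < h → ⟪q, n⟫ ≤ a * h) :
    ⟪(c / h) • q, n⟫ ≤ a * c := by
  rcases (hc.trans hch).eq_or_lt with h0 | hpos
  · obtain rfl : c = 0 := le_antisymm (h0 ▸ hch) hc
    simp
  · rw [real_inner_smul_left]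
    calc c / h * ⟪q, n⟫ ≤ c / h * (a * h) :=
          mul_le_mul_of_nonneg_left (hq hpos) (div_nonneg hc hpos.le)
      _ = a * c := by field_simp

lemma hcheckm_nonneg (ηm bm bp : ℝ) : 0 ≤ hcheckm ηm bm bp := le_max_left _ _

lemma hcheckp_nonneg (ηm ηp bm bp : ℝ) : 0 ≤ hcheckp ηm ηp bm bp := le_max_left _ _

lemma hcheckm_le {ηm bm : ℝ} (bp : ℝ) (h : 0 ≤ ηm - bm) : hcheckm ηm bm bp ≤ ηm - bm :=
  max_le h (by linarith [le_max_left bm bp, show bstar bm bp = max bm bp from rfl])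

lemma hcheckp_le {ηp bp : ℝ} (ηm bm : ℝ) (h : 0 ≤ ηp - bp) : hcheckp ηm ηp bm bp ≤ ηp - bp :=
  max_le h (by linarith [le_max_right bm bp, show bstar bm bp = max bm bp from rfl])

lemma etacheckp_sub_etacheckm (ηm ηp bm bp : ℝ) :
    etacheckp ηm ηp bm bp - etacheckm ηm bm bp = hcheckp ηm ηp bm bp - hcheckm ηm bm bp := by
  unfold etacheckp etacheckm
  ring

lemma lfMassFlux_le {a ηm ηp bm bp : ℝ} {qm qp n : E2} (ha : 0 ≤ a)
    (hm : 0 ≤ ηm - bm) (hp : 0 ≤ ηp - bp)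
    (hqm : 0 < ηm - bm → ⟪qm, n⟫ ≤ a * (ηm - bm))
    (hqp : 0 < ηp - bp → ⟪qp, n⟫ ≤ a * (ηp - bp)) :
    lfMassFlux a ηm ηp bm bp qm qp n ≤ a * (ηm - bm) := by
  have hm_le := hcheckm_le bp hm
  have flux_m : ⟪qcheckm ηm bm bp qm, n⟫ ≤ a * hcheckm ηm bm bp :=
    inner_div_smul_le (hcheckm_nonneg _ _ _) hm_le hqm
  have flux_p : ⟪qcheckp ηm ηp bm bp qp, n⟫ ≤ a * hcheckp ηm ηp bm bp :=
    inner_div_smul_le (hcheckp_nonneg _ _ _ _) (hcheckp_le ηm bm hp) hqp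
  calc lfMassFlux a ηm ηp bm bp qm qp n ≤ a * hcheckm ηm bm bp := by
        rw [lfMassFlux, etacheckp_sub_etacheckm]
        linarith
    _ ≤ a * (ηm - bm) := mul_le_mul_of_nonneg_left hm_le ha

lemma forward_euler_nonneg_of_cfl {ι : Type*} {s : Finset ι} {ℓ F : ι → ℝ} {h a c : ℝ}
    (hh : 0 ≤ h) (hc : 0 ≤ c) (hℓ : ∀ i ∈ s, 0 ≤ ℓ i) (hF : ∀ i ∈ s, F i ≤ a * h)
    (hcfl : a * (∑ i ∈ s, ℓ i) * c ≤ 1) :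
    0 ≤ h - c * ∑ i ∈ s, ℓ i * F i := by
  have outflow : c * ∑ i ∈ s, ℓ i * F i ≤ h * (a * (∑ i ∈ s, ℓ i) * c) :=
    calc c * ∑ i ∈ s, ℓ i * F i ≤ c * ∑ i ∈ s, ℓ i * (a * h) :=
          mul_le_mul_of_nonneg_left
            (sum_le_sum fun i hi => mul_le_mul_of_nonneg_left (hF i hi) (hℓ i hi)) hc
      _ = h * (a * (∑ i ∈ s, ℓ i) * c) := by rw [← sum_mul]; ring
  linarith [mul_le_of_le_one_right hh hcfl]

theorem LF_scheme_positivity_general {ι : Type*} (s : Finset ι)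
    (g Δt area : ℝ) (hΔt : 0 < Δt) (harea : 0 < area)
    (ℓ : ι → ℝ) (hℓ : ∀ i ∈ s, 0 < ℓ i)
    (n : ι → E2)
    (η b : ℝ) (q : E2)
    (hh : 0 ≤ η - b)
    (ηe be : ι → ℝ) (qe : ι → E2)
    (hhe : ∀ i ∈ s, 0 ≤ ηe i - be i)
    (a : ℝ) (ha : 0 ≤ a)
    (ha_int : ∀ i ∈ s, 0 < η - b → |⟪q, n i⟫| / (η - b) + Real.sqrt (g * (η - b)) ≤ a)
    (ha_ext : ∀ i ∈ s, 0 < ηe i - be i →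
      |⟪qe i, n i⟫| / (ηe i - be i) + Real.sqrt (g * (ηe i - be i)) ≤ a)
    (hCFL : a * (∑ i ∈ s, ℓ i) * Δt / area ≤ 1) :
    0 ≤ (η - b) - (Δt / area) * ∑ i ∈ s, ℓ i *
        ((1 / 2 : ℝ) * (⟪qcheckm η b (be i) q, n i⟫ + ⟪qcheckp η (ηe i) b (be i) (qe i), n i⟫
          - a * (etacheckp η (ηe i) b (be i) - etacheckm η b (be i)))) := by
  have hflux : ∀ i ∈ s, lfMassFlux a η (ηe i) b (be i) q (qe i) (n i) ≤ a * (η - b) :=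
    fun i hi => lfMassFlux_le ha hh (hhe i hi)
      (fun hpos => le_mul_of_abs_div_add_le hpos (Real.sqrt_nonneg _) (ha_int i hi hpos))
      (fun hpos => le_mul_of_abs_div_add_le hpos (Real.sqrt_nonneg _) (ha_ext i hi hpos))
  exact forward_euler_nonneg_of_cfl hh (div_pos hΔt harea).le (fun i hi => (hℓ i hi).le) hflux
    (by rwa [mul_div_assoc] at hCFL)

/-- Positivity of the updated cell-averaged water height for the first
order Lax–Friedrichs scheme with hydrostatic reconstruction under the CFL condition
`a (Σᵢ ℓᵢ) Δt / |T| ≤ 1`. -/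
theorem LF_scheme_positivity {ι : Type*} (s : Finset ι)
    (g Δt area : ℝ) (hg : 0 ≤ g) (hΔt : 0 < Δt) (harea : 0 < area)
    (ℓ : ι → ℝ) (hℓ : ∀ i ∈ s, 0 < ℓ i)
    (n : ι → E2) (hn : ∀ i ∈ s, ‖n i‖ = 1)
    (hclosed : ∑ i ∈ s, ℓ i • n i = 0)
    (η b : ℝ) (q : E2)
    (hh : 0 ≤ η - b) (hq0 : η - b = 0 → q = 0)
    (ηe be : ι → ℝ) (qe : ι → E2)
    (hhe : ∀ i ∈ s, 0 ≤ ηe i - be i) (hqe0 : ∀ i ∈ s, ηe i - be i = 0 → qe i = 0)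
    (a : ℝ) (ha : 0 ≤ a)
    (ha_int : ∀ i ∈ s, 0 < η - b → |⟪q, n i⟫| / (η - b) + Real.sqrt (g * (η - b)) ≤ a)
    (ha_ext : ∀ i ∈ s, 0 < ηe i - be i →
      |⟪qe i, n i⟫| / (ηe i - be i) + Real.sqrt (g * (ηe i - be i)) ≤ a)
    (hCFL : a * (∑ i ∈ s, ℓ i) * Δt / area ≤ 1) :
    0 ≤ (η - b) - (Δt / area) * ∑ i ∈ s, ℓ i *
        ((1 / 2 : ℝ) * (⟪qcheckm η b (be i) q, n i⟫ + ⟪qcheckp η (ηe i) b (be i) (qe i), n i⟫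
          - a * (etacheckp η (ηe i) b (be i) - etacheckm η b (be i)))) :=
  LF_scheme_positivity_general s g Δt area hΔt harea ℓ hℓ n η b q hh ηe be qe hhe a ha ha_int ha_ext
    hCFL
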